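/- arXiv:2110.00684 — 2 statements merged into one kernel-verified Lean document; each statement's English description precedes it below -/
import Mathlib

section
/- Let n ≥ 1 be an integer, α > 0, k > 0, λ > 0, and let l ≥ 2 be an integer. Define g_j(β) = max(tanh(α(k·j/n + β)), 0), fix h ∈ ℝⁿ, let ℓ : ℝⁿ → ℝ, and set L(β) = ℓ(h ⊙ g(β)) + λβ/(l-1). Suppose β* ∈ ℝ satisfies k·j/n + β* ≠ 0 for all j ∈ {1,…,n}, ℓ is differentiable at o(β*) = h ⊙ g(β*), and L has derivative 0 at β* (equilibrium). Then Σ_{j : k·j/n + β* > 0} (∂ℓ/∂o_j)(o(β*)) · h_j · (1 - g_j(β*)²) = -λ/(α(l-1)); in particular this sum over the support neurons is strictly negative. -/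
private lemma tanh_hasDerivAt (x : ℝ) :
    HasDerivAt Real.tanh (1 - Real.tanh x ^ 2) x := by
  have hc : Real.cosh x ≠ 0 := (Real.cosh_pos x).ne'
  have h := (Real.hasDerivAt_sinh x).div (Real.hasDerivAt_cosh x) hc
  have hfun : (fun y => Real.sinh y / Real.cosh y) = Real.tanh := by
    funext y; rw [Real.tanh_eq_sinh_div_cosh]
  rw [show (Real.sinh / Real.cosh) = (fun y => Real.sinh y / Real.cosh y) from rfl, hfun] at h
  refine h.congr_deriv ?_
  rw [Real.tanh_eq_sinh_div_cosh]
  have := Real.cosh_sq_sub_sinh_sq x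
  field_simp

private lemma tanh_pos_iff' (x : ℝ) : 0 < Real.tanh x ↔ 0 < x := by
  rw [Real.tanh_eq_sinh_div_cosh, lt_div_iff₀ (Real.cosh_pos x), zero_mul,
    Real.sinh_pos_iff]

private lemma tanh_nonpos_iff' (x : ℝ) : Real.tanh x ≤ 0 ↔ x ≤ 0 := by
  rw [Real.tanh_eq_sinh_div_cosh, div_le_iff₀ (Real.cosh_pos x), zero_mul,
    Real.sinh_nonpos_iff]

theorem stmt_11 (n : ℕ) (hn : 1 ≤ n) (α k lam : ℝ) (hα : 0 < α) (hk : 0 < k)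
    (hlam : 0 < lam) (l : ℕ) (hl : 2 ≤ l)
    (g : ℝ → Fin n → ℝ)
    (hg : ∀ β (j : Fin n), g β j = max (Real.tanh (α * (k * (j.1 + 1) / n + β))) 0)
    (h : Fin n → ℝ) (ℓ : (Fin n → ℝ) → ℝ)
    (o : ℝ → Fin n → ℝ) (ho : ∀ β j, o β j = h j * g β j)
    (L : ℝ → ℝ) (hL : ∀ β, L β = ℓ (o β) + lam * β / ((l : ℝ) - 1))
    (βs : ℝ) (hβs : ∀ j : Fin n, k * (j.1 + 1) / n + βs ≠ 0)
    (hℓ : DifferentiableAt ℝ ℓ (o βs))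
    (heq : HasDerivAt L 0 βs) :
    (∑ j ∈ Finset.univ.filter (fun j : Fin n => 0 < k * (j.1 + 1) / n + βs),
        fderiv ℝ ℓ (o βs) (Pi.single j 1) * h j * (1 - g βs j ^ 2))
      = -lam / (α * ((l : ℝ) - 1)) ∧
    (∑ j ∈ Finset.univ.filter (fun j : Fin n => 0 < k * (j.1 + 1) / n + βs),
        fderiv ℝ ℓ (o βs) (Pi.single j 1) * h j * (1 - g βs j ^ 2)) < 0 := by
  have hl1 : (1:ℝ) < (l:ℝ) := by exact_mod_cast Nat.lt_of_lt_of_le Nat.one_lt_two hl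
  have hl0 : (0:ℝ) < (l:ℝ) - 1 := by linarith
  set d : Fin n → ℝ := fun j =>
    if 0 < k * (j.1 + 1) / n + βs then α * (1 - g βs j ^ 2) else 0 with hd
  -- derivative of each gate component
  have hder : ∀ j : Fin n, HasDerivAt (fun β => g β j) (d j) βs := by
    intro j
    have hcont : ContinuousAt (fun β : ℝ => k * (j.1 + 1) / n + β) βs :=
      continuousAt_const.add continuousAt_id
    rcases lt_or_gt_of_ne (hβs j) with hneg | hpos
    · -- negative case: locally zero
      have hev : ∀ᶠ β in nhds βs, g β j = 0 := by
        filter_upwards [hcont.eventually (eventually_lt_nhds hneg)] with β hb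
        rw [hg]
        exact max_eq_right ((tanh_nonpos_iff' _).mpr
          (mul_nonpos_of_nonneg_of_nonpos hα.le hb.le))
      have : d j = 0 := by simp [hd, not_lt.mpr hneg.le, asymm hneg]
      rw [this]
      exact (hasDerivAt_const βs (0:ℝ)).congr_of_eventuallyEq hev
    · -- positive case: locally tanh
      have hev : ∀ᶠ β in nhds βs,
          g β j = Real.tanh (α * (k * (j.1 + 1) / n + β)) := by
        filter_upwards [hcont.eventually (eventually_gt_nhds hpos)] with β hb
        rw [hg]
        exact max_eq_left ((tanh_pos_iff' _).mpr (mul_pos hα hb)).le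
      have h1 : HasDerivAt (fun β : ℝ => k * (j.1 + 1) / n + β) 1 βs :=
        (hasDerivAt_id βs).const_add _
      have h2 : HasDerivAt (fun β : ℝ => α * (k * (j.1 + 1) / n + β)) α βs := by
        simpa using h1.const_mul α
      have h3 := (tanh_hasDerivAt (α * (k * (j.1 + 1) / n + βs))).comp βs h2
      have hgval : g βs j = Real.tanh (α * (k * (j.1 + 1) / n + βs)) := by
        rw [hg]
        exact max_eq_left ((tanh_pos_iff' _).mpr (mul_pos hα hpos)).le
      have hdj : d j = (1 - Real.tanh (α * (k * (j.1 + 1) / n + βs)) ^ 2) * α := by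
        simp [hd, hpos, hgval]; ring
      rw [hdj]
      exact h3.congr_of_eventuallyEq hev
  -- derivative of o
  set v : Fin n → ℝ := fun j => h j * d j with hv
  have hoder : HasDerivAt o v βs := by
    rw [hasDerivAt_pi]
    intro j
    have := (hder j).const_mul (h j)
    exact this.congr_of_eventuallyEq (Filter.Eventually.of_forall fun β => ho β j)
  set F := fderiv ℝ ℓ (o βs) with hF
  have hchain : HasDerivAt (fun β => ℓ (o β)) (F v) βs :=
    hℓ.hasFDerivAt.comp_hasDerivAt βs hoder
  have hLder : HasDerivAt L (F v + lam / ((l:ℝ) - 1)) βs := by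
    have hlin : HasDerivAt (fun β : ℝ => lam * β / ((l:ℝ) - 1))
        (lam / ((l:ℝ) - 1)) βs := by
      simpa using ((hasDerivAt_id βs).const_mul lam).div_const ((l:ℝ) - 1)
    exact (hchain.add hlin).congr_of_eventuallyEq
      (Filter.Eventually.of_forall fun β => hL β)
  have huniq : F v + lam / ((l:ℝ) - 1) = 0 := (hLder.unique heq)
  have hFv : F v = -lam / ((l:ℝ) - 1) := by rw [neg_div]; linarith
  -- expand F v as a sum
  have hvsum : v = ∑ j : Fin n, v j • (Pi.single j 1 : Fin n → ℝ) := by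
    funext i
    simp [Pi.single_apply, Finset.sum_ite_eq']
  have hFsum : F v = ∑ j : Fin n, v j * F (Pi.single j 1) := by
    conv_lhs => rw [hvsum]
    rw [map_sum]
    exact Finset.sum_congr rfl fun j _ => by rw [map_smul]; rfl
  have hfilter : ∑ j : Fin n, v j * F (Pi.single j 1)
      = α * ∑ j ∈ Finset.univ.filter
          (fun j : Fin n => 0 < k * (j.1 + 1) / n + βs),
          F (Pi.single j 1) * h j * (1 - g βs j ^ 2) := by
    rw [Finset.mul_sum]
    rw [← Finset.sum_filter_of_ne (p := fun j : Fin n => 0 < k * (j.1 + 1) / n + βs)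
      (by
        intro j _ hne
        by_contra hnp
        exact hne (by simp [hv, hd, hnp]))]
    refine Finset.sum_congr rfl fun j hj => ?_
    have hpos : 0 < k * (j.1 + 1) / n + βs := (Finset.mem_filter.mp hj).2
    simp only [hv, hd, if_pos hpos]
    ring
  have hS : α * ∑ j ∈ Finset.univ.filter
      (fun j : Fin n => 0 < k * (j.1 + 1) / n + βs),
      F (Pi.single j 1) * h j * (1 - g βs j ^ 2) = -lam / ((l:ℝ) - 1) := by
    rw [← hfilter, ← hFsum, hFv]
  have hmain : (∑ j ∈ Finset.univ.filter
      (fun j : Fin n => 0 < k * (j.1 + 1) / n + βs),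
      F (Pi.single j 1) * h j * (1 - g βs j ^ 2)) = -lam / (α * ((l:ℝ) - 1)) := by
    have hα' : α ≠ 0 := hα.ne'
    field_simp at hS ⊢
    linarith [hS]
  refine ⟨hmain, ?_⟩
  rw [hmain]
  exact div_neg_of_neg_of_pos (neg_neg_iff_pos.mpr hlam) (mul_pos hα hl0)
end

section
/- (Existence of Optimal Solution for linear dimensionality reduction with DAM.) Let d, n, N be positive integers, α > 0, k > 0, and let g_j(β) = max(tanh(α(k·j/n + β)), 0) for j ∈ {1,…,n}. Let X ∈ ℝ^{d×N} have rank(X) = m with 1 ≤ m ≤ n. For a configuration (A₁, A₂, β) with A₁ ∈ ℝ^{d×n}, A₂ ∈ ℝ^{n×d}, β ∈ [-k, 0], define the objective L_λ(A₁, A₂, β) = ‖A₁ diag(g(β)) A₂ X - X‖_F² + λβ. Then there exist λ > 0 and a configuration (A₁*, A₂*, β*) with β* ∈ [-k, 0] such that (i) A₁* diag(g(β*)) A₂* X = X (exact reconstruction), (ii) the number of indices j with g_j(β*) ≠ 0 equals m, and (iii) for every configuration (A₁, A₂, β) with β ∈ [-k, 0] whose number of active neurons #{j : g_j(β) ≠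 0} is different from m, one has L_λ(A₁*, A₂*, β*) < L_λ(A₁, A₂, β). -/
open Matrix Module Finset

lemma gate_pos_iff (t : ℝ) : max (Real.tanh t) 0 ≠ 0 ↔ 0 < t := by
  constructor
  · intro h
    by_contra hle
    push_neg at hle
    apply h
    rw [max_eq_right]
    rw [Real.tanh_eq_sinh_div_cosh]
    apply div_nonpos_of_nonpos_of_nonneg
    · rw [← Real.sinh_zero]
      exact Real.sinh_le_sinh.mpr hle
    · exact (Real.cosh_pos t).le
  · intro h
    have : 0 < Real.tanh t := by
      rw [Real.tanh_eq_sinh_div_cosh]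
      exact div_pos (Real.sinh_pos_iff.mpr h) (Real.cosh_pos t)
    rw [max_eq_left this.le]
    exact this.ne'



lemma factorize (d N m : ℕ) (X : Matrix (Fin d) (Fin N) ℝ) (hrank : X.rank = m) :
    ∃ (M₁ : Matrix (Fin d) (Fin m) ℝ) (M₂ : Matrix (Fin m) (Fin d) ℝ),
      M₁ * M₂ * X = X := by
  set R : Submodule ℝ (Fin d → ℝ) := LinearMap.range X.mulVecLin with hR
  have hfr : finrank ℝ R = m := hrank
  let b : Basis (Fin m) ℝ R := finBasisOfFinrankEq ℝ R hfr
  obtain ⟨p, hp⟩ := R.subtype.exists_leftInverse_of_injective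
    (Submodule.ker_subtype R)
  let φ : (Fin m → ℝ) →ₗ[ℝ] (Fin d → ℝ) := R.subtype ∘ₗ b.equivFun.symm.toLinearMap
  let ψ : (Fin d → ℝ) →ₗ[ℝ] (Fin m → ℝ) := b.equivFun.toLinearMap ∘ₗ p
  refine ⟨LinearMap.toMatrix' φ, LinearMap.toMatrix' ψ, ?_⟩
  have hφ : ∀ w, LinearMap.toMatrix' φ *ᵥ w = φ w := by
    intro w; rw [← Matrix.toLin'_apply, Matrix.toLin'_toMatrix']
  have hψ : ∀ w, LinearMap.toMatrix' ψ *ᵥ w = ψ w := by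
    intro w; rw [← Matrix.toLin'_apply, Matrix.toLin'_toMatrix']
  have key : ∀ v : Fin N → ℝ,
      (LinearMap.toMatrix' φ * LinearMap.toMatrix' ψ * X) *ᵥ v = X *ᵥ v := by
    intro v
    have hmem : X *ᵥ v ∈ R := ⟨v, rfl⟩
    rw [← Matrix.mulVec_mulVec, ← Matrix.mulVec_mulVec, hψ, hφ]
    have hpx : p (X *ᵥ v) = ⟨X *ᵥ v, hmem⟩ := by
      have := congrArg (fun f => f ⟨X *ᵥ v, hmem⟩) hp
      simpa using this
    show R.subtype (b.equivFun.symm (b.equivFun (p (X *ᵥ v)))) = X *ᵥ v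
    rw [hpx, LinearEquiv.symm_apply_apply]; rfl
  ext i j
  have := congrFun (key (Pi.single j 1)) i
  simpa [Matrix.mulVec_single] using this



lemma normsq_one (Nn : ℕ) (w : Fin Nn → ℝ) (hw : w ≠ 0) :
    ∃ c : ℝ, 0 < c ∧ ∑ j, (c • w) j ^ 2 = 1 := by
  have hpos : 0 < ∑ j, w j ^ 2 := by
    obtain ⟨j, hj⟩ : ∃ j, w j ≠ 0 := by
      by_contra h; push_neg at h; exact hw (funext h)
    exact Finset.sum_pos' (fun i _ => sq_nonneg _) ⟨j, Finset.mem_univ j, by positivity⟩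
  refine ⟨(Real.sqrt (∑ j, w j ^ 2))⁻¹, by positivity, ?_⟩
  have h1 : ∑ j, ((Real.sqrt (∑ j, w j ^ 2))⁻¹ • w) j ^ 2
      = ((Real.sqrt (∑ j, w j ^ 2))⁻¹)^2 * ∑ j, w j ^ 2 := by
    rw [Finset.mul_sum]; congr 1; ext j; simp [Pi.smul_apply, mul_pow]
  rw [h1, inv_pow, Real.sq_sqrt hpos.le, inv_mul_cancel₀ hpos.ne']

lemma uniform_bound (d N m : ℕ) (hm : 1 ≤ m) (X : Matrix (Fin d) (Fin N) ℝ)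
    (hrank : X.rank = m) :
    ∃ δ > 0, ∀ Y : Matrix (Fin d) (Fin N) ℝ, Y.rank < m →
      δ ≤ ∑ i, ∑ j, (Y i j - X i j) ^ 2 := by
  classical
  set R : Submodule ℝ (Fin N → ℝ) := LinearMap.range Xᵀ.mulVecLin with hRdef
  have hfrR : finrank ℝ R = m := by
    have : Xᵀ.rank = m := by rw [Matrix.rank_transpose]; exact hrank
    exact this
  -- key injectivity
  have key0 : ∀ v ∈ R, X *ᵥ v = 0 → v = 0 := by
    rintro v ⟨u, rfl⟩ hXv
    simp only [Matrix.mulVecLin_apply] at hXv ⊢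
    have hdot : (Xᵀ *ᵥ u) ⬝ᵥ (Xᵀ *ᵥ u) = 0 := by
      nth_rewrite 1 [Matrix.mulVec_transpose]
      rw [← Matrix.dotProduct_mulVec, hXv, dotProduct_zero]
    have hsum : ∑ j, (Xᵀ *ᵥ u) j ^ 2 = 0 := by
      simpa [dotProduct, pow_two] using hdot
    funext j
    have := (Finset.sum_eq_zero_iff_of_nonneg (fun i _ => sq_nonneg _)).mp hsum j
      (Finset.mem_univ j)
    simpa [pow_eq_zero_iff] using this
  -- the compact set
  set S : Set (Fin N → ℝ) := {v | v ∈ R ∧ ∑ j, v j ^ 2 = 1} with hSdef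
  have hSclosed : IsClosed S := by
    have h1 : IsClosed (R : Set (Fin N → ℝ)) := R.closed_of_finiteDimensional
    have h2 : IsClosed {v : Fin N → ℝ | ∑ j, v j ^ 2 = 1} :=
      isClosed_eq (by continuity) continuous_const
    exact h1.inter h2
  have hSsub : S ⊆ Metric.closedBall 0 1 := by
    rintro v ⟨_, hv1⟩
    rw [Metric.mem_closedBall, dist_zero_right]
    rw [pi_norm_le_iff_of_nonneg zero_le_one]
    intro i
    rw [Real.norm_eq_abs, ← sq_le_one_iff_abs_le_one]
    calc v i ^ 2 ≤ ∑ j, v j ^ 2 :=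
          Finset.single_le_sum (f := fun j => v j ^ 2) (fun j _ => sq_nonneg _)
            (Finset.mem_univ i)
      _ = 1 := hv1
  have hScompact : IsCompact S :=
    (isCompact_closedBall (0 : Fin N → ℝ) 1).of_isClosed_subset hSclosed hSsub
  have hSne : S.Nonempty := by
    have hRne : R ≠ ⊥ := by
      intro h
      rw [h] at hfrR
      simp [finrank_bot] at hfrR
      omega
    obtain ⟨w, hwR, hw0⟩ := Submodule.exists_mem_ne_zero_of_ne_bot hRne
    obtain ⟨c, hc, hc1⟩ := normsq_one N w hw0
    exact ⟨c • w, R.smul_mem c hwR, hc1⟩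
  -- the function
  set f : (Fin N → ℝ) → ℝ := fun v => ∑ i, (X *ᵥ v) i ^ 2 with hfdef
  have hfcont : Continuous f := by
    apply continuous_finset_sum
    intro i _
    have : Continuous fun v : Fin N → ℝ => (X *ᵥ v) i := by
      simp only [Matrix.mulVec, dotProduct]
      exact continuous_finset_sum _ (fun j _ => continuous_const.mul (continuous_apply j))
    exact this.pow 2
  obtain ⟨v₀, hv₀S, hmin⟩ := hScompact.exists_isMinOn hSne hfcont.continuousOn
  have hδpos : 0 < f v₀ := by
    have hv₀ne : v₀ ≠ 0 := by
      intro h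
      have := hv₀S.2
      rw [h] at this
      simp at this
    have hXv₀ : X *ᵥ v₀ ≠ 0 := fun h => hv₀ne (key0 v₀ hv₀S.1 h)
    obtain ⟨i, hi⟩ : ∃ i, (X *ᵥ v₀) i ≠ 0 := by
      by_contra h; push_neg at h; exact hXv₀ (funext h)
    exact Finset.sum_pos' (fun i _ => sq_nonneg _) ⟨i, Finset.mem_univ i, by positivity⟩
  refine ⟨f v₀, hδpos, ?_⟩
  intro Y hY
  -- find v in ker Y ∩ R
  set K : Submodule ℝ (Fin N → ℝ) := LinearMap.ker Y.mulVecLin with hKdef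
  have hKfr : finrank ℝ K + Y.rank = N := by
    have := LinearMap.finrank_range_add_finrank_ker Y.mulVecLin
    rw [Module.finrank_fin_fun] at this
    rw [add_comm] at this
    exact this
  have hsup : finrank ℝ (K ⊔ R : Submodule ℝ (Fin N → ℝ)) ≤ N := by
    have := Submodule.finrank_le (K ⊔ R)
    rwa [Module.finrank_fin_fun] at this
  have hinf : 0 < finrank ℝ (K ⊓ R : Submodule ℝ (Fin N → ℝ)) := by
    have heq := Submodule.finrank_sup_add_finrank_inf_eq K R
    omega
  obtain ⟨w, hwKR, hw0⟩ := Submodule.exists_mem_ne_zero_of_ne_bot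
    (p := K ⊓ R) (by intro h; rw [h] at hinf; simp [finrank_bot] at hinf)
  obtain ⟨c, hc, hc1⟩ := normsq_one N w hw0
  have hvK : Y *ᵥ (c • w) = 0 := by
    have hw : Y *ᵥ w = 0 := by
      have := hwKR.1
      have h2 : Y.mulVecLin w = 0 := this
      simpa [Matrix.mulVecLin_apply] using h2
    rw [Matrix.mulVec_smul, hw, smul_zero]
  have hvR : c • w ∈ R := R.smul_mem c hwKR.2
  have hvS : (c • w) ∈ S := ⟨hvR, hc1⟩
  set v := c • w with hvdef
  -- Cauchy-Schwarz
  have hCS : ∀ i, (∑ j, (Y i j - X i j) * v j) ^ 2 ≤ ∑ j, (Y i j - X i j) ^ 2 := by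
    intro i
    calc (∑ j, (Y i j - X i j) * v j) ^ 2
        ≤ (∑ j, (Y i j - X i j) ^ 2) * ∑ j, v j ^ 2 :=
          Finset.sum_mul_sq_le_sq_mul_sq _ _ _
      _ = ∑ j, (Y i j - X i j) ^ 2 := by rw [hc1]; ring
  have hrow : ∀ i, ∑ j, (Y i j - X i j) * v j = -((X *ᵥ v) i) := by
    intro i
    have : ∑ j, (Y i j - X i j) * v j = (Y *ᵥ v) i - (X *ᵥ v) i := by
      simp [Matrix.mulVec, dotProduct, sub_mul, Finset.sum_sub_distrib]
    rw [this, hvK]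
    simp
  calc f v₀ ≤ f v := hmin hvS
    _ = ∑ i, (∑ j, (Y i j - X i j) * v j) ^ 2 := by
        apply Finset.sum_congr rfl
        intro i _
        rw [hrow i, neg_pow]
        ring
    _ ≤ ∑ i, ∑ j, (Y i j - X i j) ^ 2 :=
        Finset.sum_le_sum (fun i _ => hCS i)

theorem stmt_18 (d n N : ℕ) (hd : 0 < d) (hn : 0 < n) (hN : 0 < N)
    (α k : ℝ) (hα : 0 < α) (hk : 0 < k)
    (g : ℝ → Fin n → ℝ)
    (hg : ∀ β (j : Fin n), g β j = max (Real.tanh (α * (k * (j.1 + 1) / n + β))) 0)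
    (X : Matrix (Fin d) (Fin N) ℝ) (m : ℕ) (hm : 1 ≤ m) (hmn : m ≤ n)
    (hrank : X.rank = m)
    (L : ℝ → Matrix (Fin d) (Fin n) ℝ → Matrix (Fin n) (Fin d) ℝ → ℝ → ℝ)
    (hL : ∀ lam A₁ A₂ β, L lam A₁ A₂ β =
      (∑ i, ∑ j, ((A₁ * Matrix.diagonal (g β) * A₂ * X) i j - X i j) ^ 2) + lam * β) :
    ∃ lam > 0, ∃ (A₁s : Matrix (Fin d) (Fin n) ℝ) (A₂s : Matrix (Fin n) (Fin d) ℝ)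
      (βs : ℝ), -k ≤ βs ∧ βs ≤ 0 ∧
      A₁s * Matrix.diagonal (g βs) * A₂s * X = X ∧
      (Finset.univ.filter (fun j : Fin n => g βs j ≠ 0)).card = m ∧
      ∀ (A₁ : Matrix (Fin d) (Fin n) ℝ) (A₂ : Matrix (Fin n) (Fin d) ℝ) (β : ℝ),
        -k ≤ β → β ≤ 0 →
        (Finset.univ.filter (fun j : Fin n => g β j ≠ 0)).card ≠ m →
        L lam A₁s A₂s βs < L lam A₁ A₂ β := by
  classical
  have hnR : (0:ℝ) < n := by exact_mod_cast hn
  have hnne : (n:ℝ) ≠ 0 := hnR.ne'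
  -- gate characterization
  have hgiff : ∀ β (j : Fin n), g β j ≠ 0 ↔ -(k * (j.1 + 1) / n) < β := by
    intro β j
    rw [hg, gate_pos_iff, mul_pos_iff_of_pos_left hα]
    constructor
    · intro h; linarith
    · intro h; linarith
  set s : ℕ := n - m with hs
  have hslt : s < n := by omega
  have hs1n : s + 1 ≤ n := by omega
  have hs1nR : (s:ℝ) + 1 ≤ n := by exact_mod_cast hs1n
  set βs : ℝ := -(k * (s + 1) / n) + k / n * (1/2) with hβs
  have hβs' : βs = (k * (1/2) - k * ((s:ℝ) + 1)) / n := by rw [hβs]; ring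
  have hsnn : (0:ℝ) ≤ (s:ℝ) := Nat.cast_nonneg s
  -- βs bounds
  have hβsk : -k ≤ βs := by
    rw [hβs']
    have h1 : -k = (-(k * (n:ℝ))) / n := by field_simp
    rw [h1, div_le_div_iff₀ hnR hnR]
    have h2 : k * ((s:ℝ) + 1) ≤ k * (n:ℝ) := mul_le_mul_of_nonneg_left hs1nR hk.le
    apply mul_le_mul_of_nonneg_right _ hnR.le
    linarith
  have hβs0 : βs ≤ 0 := by
    rw [hβs']
    apply div_nonpos_of_nonpos_of_nonneg _ hnR.le
    nlinarith
  -- activity characterization at βs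
  have hact : ∀ j : Fin n, g βs j ≠ 0 ↔ s ≤ j.1 := by
    intro j
    rw [hgiff, hβs', ← neg_div, div_lt_div_iff_of_pos_right hnR]
    constructor
    · intro h
      have h2 : (s:ℝ) < (j.1:ℝ) + 1 := by nlinarith
      have h3 : s < j.1 + 1 := by exact_mod_cast h2
      omega
    · intro h
      have hj : (s:ℝ) ≤ (j.1:ℝ) := by exact_mod_cast h
      nlinarith
  -- the active count at βs is m
  have hcount : (Finset.univ.filter (fun j : Fin n => g βs j ≠ 0)).card = m := by
    have h1 : (Finset.univ.filter (fun j : Fin n => g βs j ≠ 0))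
        = Finset.Ici (⟨s, hslt⟩ : Fin n) := by
      ext j
      simp only [Finset.mem_filter, Finset.mem_univ, true_and, Finset.mem_Ici,
        Fin.le_def, hact]
    rw [h1, Fin.card_Ici]
    show n - s = m
    omega
  -- gates at active indices are nonzero
  have hgne : ∀ j : Fin n, s ≤ j.1 → g βs j ≠ 0 := fun j hj => (hact j).mpr hj
  -- construction
  obtain ⟨M₁, M₂, hfac⟩ := factorize d N m X hrank
  set r : Fin n → Fin m := fun j => ⟨j.1 - s, by have := j.2; omega⟩ with hr
  set e : Fin m → Fin n := fun t => ⟨s + t.1, by have := t.2; omega⟩ with he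
  set A₁s : Matrix (Fin d) (Fin n) ℝ :=
    Matrix.of (fun i j => if s ≤ j.1 then M₁ i (r j) else 0) with hA₁s
  set A₂s : Matrix (Fin n) (Fin d) ℝ :=
    Matrix.of (fun j i => if s ≤ j.1 then (g βs j)⁻¹ * M₂ (r j) i else 0) with hA₂s
  have hprod : A₁s * Matrix.diagonal (g βs) * A₂s = M₁ * M₂ := by
    ext i l
    rw [Matrix.mul_apply, Matrix.mul_apply]
    simp_rw [Matrix.mul_diagonal]
    have hterm : ∀ j : Fin n,
        A₁s i j * g βs j * A₂s j l
          = if s ≤ j.1 then M₁ i (r j) * M₂ (r j) l else 0 := by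
      intro j
      by_cases hj : s ≤ j.1
      · simp only [hA₁s, hA₂s, Matrix.of_apply, if_pos hj]
        field_simp [hgne j hj]
      · simp [hA₁s, hA₂s, Matrix.of_apply, if_neg hj]
    simp_rw [hterm]
    rw [Finset.sum_ite, Finset.sum_const_zero, add_zero]
    apply Finset.sum_nbij' (i := r) (j := e)
    · intro a _; exact Finset.mem_univ _
    · intro t _
      simp only [Finset.mem_filter, Finset.mem_univ, true_and, he]
      omega
    · intro a ha
      simp only [Finset.mem_filter, Finset.mem_univ, true_and] at ha
      apply Fin.ext
      show s + (a.1 - s) = a.1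
      omega
    · intro t _
      apply Fin.ext
      show s + t.1 - s = t.1
      omega
    · intro a ha
      simp only [Finset.mem_filter, Finset.mem_univ, true_and] at ha
      rfl
  have hrecon : A₁s * Matrix.diagonal (g βs) * A₂s * X = X := by
    rw [hprod]; exact hfac
  -- choose lambda
  obtain ⟨δ, hδpos, hδ⟩ := uniform_bound d N m hm X hrank
  have hkβ : 0 < k + βs := by
    have heq : k + (k * (1/2) - k * ((s:ℝ) + 1)) / n
        = (k * (n:ℝ) + (k * (1/2) - k * ((s:ℝ) + 1))) / n := by field_simp
    rw [hβs', heq]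
    apply div_pos _ hnR
    nlinarith
  obtain ⟨lam, hlam⟩ : ∃ lam : ℝ, lam = δ / (2 * (k + βs)) := ⟨_, rfl⟩
  have hlampos : 0 < lam := by rw [hlam]; exact div_pos hδpos (by linarith)
  have hlamprod : lam * (βs + k) = δ / 2 := by
    rw [hlam]
    field_simp
    ring
  refine ⟨lam, hlampos, A₁s, A₂s, βs, hβsk, hβs0, hrecon, hcount, ?_⟩
  intro A₁ A₂ β hβk hβ0 hcard
  have hLstar : L lam A₁s A₂s βs = lam * βs := by
    rw [hL]
    rw [hrecon]
    simp
  rw [hLstar, hL]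
  have herrnn : 0 ≤ ∑ i, ∑ j, ((A₁ * Matrix.diagonal (g β) * A₂ * X) i j - X i j) ^ 2 :=
    Finset.sum_nonneg fun i _ => Finset.sum_nonneg fun j _ => sq_nonneg _
  rcases lt_or_gt_of_ne hcard with hlt | hgt
  · -- fewer active neurons: error at least δ
    have hYrank : (A₁ * Matrix.diagonal (g β) * A₂ * X).rank < m := by
      have h1 : (A₁ * Matrix.diagonal (g β) * A₂ * X).rank
          ≤ (A₁ * Matrix.diagonal (g β)).rank := by
        calc (A₁ * Matrix.diagonal (g β) * A₂ * X).rank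
            ≤ (A₁ * Matrix.diagonal (g β) * A₂).rank := Matrix.rank_mul_le_left _ _
          _ ≤ (A₁ * Matrix.diagonal (g β)).rank := Matrix.rank_mul_le_left _ _
      have h2 : (A₁ * Matrix.diagonal (g β)).rank ≤ (Matrix.diagonal (g β)).rank :=
        Matrix.rank_mul_le_right _ _
      have h3 : (Matrix.diagonal (g β)).rank
          = (Finset.univ.filter (fun j : Fin n => g β j ≠ 0)).card := by
        rw [Matrix.rank_diagonal]
        exact Fintype.card_subtype _
      omega
    have herr := hδ _ hYrank
    have hβlam : lam * (-k) ≤ lam * β := mul_le_mul_of_nonneg_left hβk hlampos.le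
    have e1 : lam * (-k) = -(lam * k) := by ring
    have e2 : lam * (βs + k) = lam * βs + lam * k := by ring
    linarith
  · -- more active neurons: β > βs
    have hβgt : βs < β := by
      by_contra hle
      push_neg at hle
      have hsub : (Finset.univ.filter (fun j : Fin n => g β j ≠ 0))
          ⊆ (Finset.univ.filter (fun j : Fin n => g βs j ≠ 0)) := by
        intro j hj
        simp only [Finset.mem_filter, Finset.mem_univ, true_and] at hj ⊢
        rw [hgiff] at hj ⊢
        linarith
      have := Finset.card_le_card hsub
      omega
    have : lam * βs < lam * β := mul_lt_mul_of_pos_left hβgt hlampos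
    linarith
end
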